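/- Let 𝔄 be a model, S = {t_a : a ∈ A} a set of closed terms where each t_a denotes a in 𝔄, and T a theory such that every sentence provable from T (in ordinary first-order logic) is true in 𝔄, and such that for every atomic or negated atomic formula φ and substitution φ̄ of terms from S for all its free variables, T ⊢ φ̄ iff 𝔄 ⊨ φ̄. Then for all sentences σ, T ⊢_S σ iff 𝔄 ⊨ σ; that is, the closure of T under first-order provability plus the S-rule is exactly the complete theory Th(𝔄). -/

import Mathlib

/-
Soundness: each rule of `⊢_S` preserves truth in `𝔄`, first-order consequence because `𝔄` is a
nonempty model of `T`, the `S`-rule because every element of `𝔄` is denoted by a term in `S`.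

Completeness: by induction on `φ(x₁, …, xₖ)`, for all `s₁, …, sₖ ∈ S`, `T ⊢_S φ(s̄)` if
`𝔄 ⊨ φ(s̄)` and `T ⊢_S ¬φ(s̄)` otherwise. Literals are settled by the hypothesis on `T` and
implications propositionally. If `∀y ψ(s̄, y)` holds, all its `S`-instances are provable and
the `S`-rule applies; if it fails, it fails at the denotation of some `t ∈ S`, and `¬ψ(s̄, t)`
refutes it.
-/

open FirstOrder FirstOrder.Language Cardinal Set

universe u v w w2

/-- The universal closure `∀x φ(x)` of a formula in one free variable. -/
noncomputable def allClose {L : Language} (φ : L.Formula Unit) : L.Sentence :=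
  let e := Classical.choice (Classical.choose_spec (Finite.exists_equiv_fin Unit))
  (BoundedFormula.relabel (fun (a : Unit) => Sum.map id e
    ((fun _ : Unit => (Sum.inr () : Empty ⊕ Unit)) a)) φ).alls

/-- The existential closure `∃x φ(x)` of a formula in one free variable. -/
noncomputable def exClose {L : Language} (φ : L.Formula Unit) : L.Sentence :=
  let e := Classical.choice (Classical.choose_spec (Finite.exists_equiv_fin Unit))
  (BoundedFormula.relabel (fun (a : Unit) => Sum.map id e
    ((fun _ : Unit => (Sum.inr () : Empty ⊕ Unit)) a)) φ).exs

/-- Substitution of a closed term for the unique free variable. -/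
noncomputable def substC {L : Language} (φ : L.Formula Unit) (t : L.Term Empty) : L.Sentence :=
  φ.subst (fun _ => t)


/-- Provability generated by first-order provability (rendered, by Gödel completeness, as
semantic consequence `⊨ᵇ`) together with the `S`-rule. -/
inductive SProv (L : Language) (S : Set (L.Term Empty)) (T : L.Theory) : L.Sentence → Prop
  | ax {σ} (h : σ ∈ T) : SProv L S T σ
  | fo (T' : L.Theory) (h : ∀ σ ∈ T', SProv L S T σ) {σ} (hσ : T' ⊨ᵇ σ) : SProv L S T σ
  | srule (φ : L.Formula Unit) (h : ∀ t ∈ S, SProv L S T (substC φ t)) :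
      SProv L S T (allClose φ)

namespace FirstOrder.Language

variable {L : Language.{u, v}}

theorem BoundedFormula.IsAtomic.toFormula {α : Type*} {n : ℕ} {φ : L.BoundedFormula α n}
    (h : φ.IsAtomic) : φ.toFormula.IsAtomic :=
  IsAtomic.recOn h (fun _ _ => IsAtomic.equal _ _) fun _ _ => IsAtomic.rel _ _

/-- The sentence `φ(g 0, …, g (k-1))`. -/
noncomputable def BoundedFormula.instantiate {k : ℕ} (φ : L.BoundedFormula Empty k)
    (g : Fin k → L.Term Empty) : L.Sentence :=
  (φ.toFormula.relabel (Sum.elim Empty.elim id)).subst g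

/-- The formula `φ(g 0, …, g (k-1), x)`, the last bound variable of `φ` becoming the free
variable `x`. -/
noncomputable def BoundedFormula.instantiateInit {k : ℕ} (φ : L.BoundedFormula Empty (k + 1))
    (g : Fin k → L.Term Empty) : L.Formula Unit :=
  (φ.toFormula.relabel (Sum.elim Empty.elim id)).subst
    (Fin.snoc (fun i => (g i).relabel Empty.elim) (Term.var ()))

section Realize

variable {N : Type w} [L.Structure N]

theorem BoundedFormula.realize_instantiate {k : ℕ} (φ : L.BoundedFormula Empty k)
    (g : Fin k → L.Term Empty) :
    N ⊨ φ.instantiate g ↔ φ.Realize (default : Empty → N) (fun i => (g i).realize default) := by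
  change Formula.Realize (BoundedFormula.subst _ g) _ ↔ _
  rw [Formula.Realize, realize_subst, ← Formula.Realize, Formula.realize_relabel,
    realize_toFormula, Subsingleton.elim (_ ∘ Sum.inl) default]
  rfl

theorem BoundedFormula.realize_instantiateInit {k : ℕ} (φ : L.BoundedFormula Empty (k + 1))
    (g : Fin k → L.Term Empty) (x : N) :
    (φ.instantiateInit g).Realize (fun _ => x) ↔
      φ.Realize (default : Empty → N) (Fin.snoc (fun i => (g i).realize default) x) := by
  rw [instantiateInit, Formula.Realize, realize_subst, ← Formula.Realize, Formula.realize_relabel,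
    realize_toFormula, Subsingleton.elim (_ ∘ Sum.inl) default]
  refine iff_of_eq (congrArg _ (funext fun i => ?_))
  refine Fin.lastCases ?_ (fun j => ?_) i
  · simp
  · simp only [Function.comp_apply, Sum.elim_inr, id, Fin.snoc_castSucc, Term.realize_relabel]
    exact congrArg (Term.realize · (g j)) (Subsingleton.elim _ _)

theorem nonempty_of_forall_models_realize {T : L.Theory} (h : ∀ σ : L.Sentence, T ⊨ᵇ σ → N ⊨ σ) :
    Nonempty N := by
  have hex : T ⊨ᵇ (∃' ⊤ : L.Sentence) := Theory.models_sentence_iff.2 fun M =>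
    BoundedFormula.realize_ex.2 ⟨Classical.arbitrary M, by simp⟩
  obtain ⟨x, -⟩ := BoundedFormula.realize_ex.1 (h _ hex)
  exact ⟨x⟩

end Realize

theorem Theory.iff_of_forall_realize {T : L.Theory} {σ τ : L.Sentence}
    (h : ∀ (N : Type (max u v)) [L.Structure N], N ⊨ σ ↔ N ⊨ τ) : σ ⇔[T] τ :=
  models_sentence_iff.2 fun N => (Sentence.realize_iff N).2 (h N)

theorem Theory.imp_of_forall_realize {T : L.Theory} {σ τ : L.Sentence}
    (h : ∀ (N : Type (max u v)) [L.Structure N], N ⊨ σ → N ⊨ τ) : σ ⟹[T] τ :=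
  models_sentence_iff.2 fun N => (Sentence.realize_imp N).2 (h N)

theorem BoundedFormula.instantiate_finZeroElim_iff {T : L.Theory} (σ : L.Sentence) :
    σ.instantiate finZeroElim ⇔[T] σ :=
  Theory.iff_of_forall_realize fun N _ => by
    rw [realize_instantiate, Subsingleton.elim (fun i => _) (default : Fin 0 → N)]
    rfl

end FirstOrder.Language

section

variable {L : FirstOrder.Language.{u, v}}

theorem realize_substC {N : Type w} [L.Structure N] (φ : L.Formula Unit) (t : L.Term Empty) :
    N ⊨ substC φ t ↔ φ.Realize fun _ => t.realize (default : Empty → N) :=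
  BoundedFormula.realize_subst

theorem realize_allClose {N : Type w} [L.Structure N] (φ : L.Formula Unit) :
    N ⊨ allClose φ ↔ ∀ x : N, φ.Realize fun _ => x := by
  change Formula.Realize _ (default : Empty → N) ↔ _
  simp only [allClose, BoundedFormula.realize_alls, BoundedFormula.realize_relabel,
    Function.comp_def]
  refine ⟨fun h x => ?_, fun h xs => ?_⟩
  · rw [Formula.Realize]
    convert h fun _ => x using 2
    rfl
  · have := h (xs (Classical.choice (Classical.choose_spec (Finite.exists_equiv_fin Unit)) ()))
    rw [Formula.Realize] at this
    convert this using 2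
    rfl

theorem substC_instantiateInit_iff {T : L.Theory} {k : ℕ} (φ : L.BoundedFormula Empty (k + 1))
    (g : Fin k → L.Term Empty) (t : L.Term Empty) :
    substC (φ.instantiateInit g) t ⇔[T] φ.instantiate (Fin.snoc g t) :=
  Theory.iff_of_forall_realize fun N _ => by
    rw [realize_substC, BoundedFormula.realize_instantiateInit,
      BoundedFormula.realize_instantiate]
    exact iff_of_eq (congrArg _ (Fin.comp_snoc _ g t).symm)

theorem allClose_instantiateInit_iff {T : L.Theory} {k : ℕ} (φ : L.BoundedFormula Empty (k + 1))
    (g : Fin k → L.Term Empty) :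
    allClose (φ.instantiateInit g) ⇔[T] φ.all.instantiate g :=
  Theory.iff_of_forall_realize fun N _ => by
    rw [realize_allClose, BoundedFormula.realize_instantiate, BoundedFormula.realize_all]
    exact forall_congr' fun x => BoundedFormula.realize_instantiateInit φ g x

namespace SProv

variable {S : Set (L.Term Empty)} {T : L.Theory} {σ τ : L.Sentence}

theorem of_models (h : T ⊨ᵇ σ) : SProv L S T σ :=
  fo T (fun _ => ax) h

theorem of_valid (h : ∅ ⊨ᵇ σ) : SProv L S T σ :=
  fo ∅ (fun _ h => absurd h (Set.notMem_empty _)) h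

theorem mp (hστ : SProv L S T (σ.imp τ)) (hσ : SProv L S T σ) : SProv L S T τ :=
  fo {σ.imp τ, σ} (by rintro _ (rfl | rfl) <;> assumption) <| Theory.models_sentence_iff.2 fun N =>
    (Sentence.realize_imp N).1 (Theory.realize_sentence_of_mem {σ.imp τ, σ} (Set.mem_insert _ _))
      (Theory.realize_sentence_of_mem {σ.imp τ, σ} (Set.mem_insert_of_mem _ rfl))

theorem of_imp (hσ : SProv L S T σ) (hστ : σ ⟹[∅] τ) : SProv L S T τ :=
  (of_valid hστ).mp hσ

theorem realize {M : Type w} [L.Structure M] [Nonempty M] (hT : M ⊨ T)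
    (hS : ∀ x : M, ∃ t ∈ S, t.realize (default : Empty → M) = x) (h : SProv L S T σ) :
    M ⊨ σ := by
  induction h with
  | ax h => exact Theory.realize_sentence_of_mem T h
  | fo T' _ hσ ih =>
    have : M ⊨ T' := T'.model_iff.2 ih
    exact hσ.realize_sentence M
  | srule φ _ ih =>
    rw [realize_allClose]
    intro x
    obtain ⟨t, ht, rfl⟩ := hS x
    exact (realize_substC φ t).1 (ih t ht)

end SProv

def ProvesTrueLiterals (M : Type w) [L.Structure M] (S : Set (L.Term Empty)) (T : L.Theory) :
    Prop :=
  ∀ (n : ℕ) (φ : L.Formula (Fin n)),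
    (φ.IsAtomic ∨ ∃ ψ : L.Formula (Fin n), ψ.IsAtomic ∧ φ = ψ.not) →
      ∀ f : Fin n → L.Term Empty, (∀ i, f i ∈ S) → M ⊨ φ.subst f → T ⊨ᵇ φ.subst f

def SProvDecides (M : Type w) [L.Structure M] (S : Set (L.Term Empty)) (T : L.Theory)
    (σ : L.Sentence) : Prop :=
  (M ⊨ σ → SProv L S T σ) ∧ (¬ M ⊨ σ → SProv L S T σ.not)

section SProvDecides

variable {M : Type w} [L.Structure M] {S : Set (L.Term Empty)} {T : L.Theory} {σ τ : L.Sentence}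

theorem sprovDecides_bot : SProvDecides M S T ⊥ :=
  ⟨fun h => h.elim, fun _ => SProv.of_valid fun _ _ _ => id⟩

theorem sprovDecides_literal (hlit : ProvesTrueLiterals M S T) {n : ℕ} {φ : L.Formula (Fin n)}
    (hφ : φ.IsAtomic) {f : Fin n → L.Term Empty} (hf : ∀ i, f i ∈ S) :
    SProvDecides M S T (φ.subst f) :=
  ⟨fun h => SProv.of_models (hlit n φ (.inl hφ) f hf h),
    fun h => SProv.of_models (hlit n φ.not (.inr ⟨φ, hφ, rfl⟩) f hf ((Sentence.realize_not M).2 h))⟩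

theorem SProvDecides.imp (hσ : SProvDecides M S T σ) (hτ : SProvDecides M S T τ) :
    SProvDecides M S T (σ.imp τ) := by
  refine ⟨fun h => ?_, fun h => ?_⟩
  · by_cases hσM : M ⊨ σ
    · exact (hτ.1 (h hσM)).of_imp fun _ _ _ hτN _ => hτN
    · exact (hσ.2 hσM).of_imp fun _ _ _ hnσN hσN => (hnσN hσN).elim
  · rw [Sentence.realize_imp, Classical.not_imp] at h
    refine ((hσ.1 h.1).of_imp (τ := τ.not.imp (σ.imp τ).not) ?_).mp (hτ.2 h.2)
    exact fun _ _ _ hσN hnτN hστN => hnτN (hστN hσN)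

theorem SProvDecides.of_iff [Nonempty M] (h : SProvDecides M S T σ) (hστ : σ ⇔[∅] τ) :
    SProvDecides M S T τ :=
  ⟨fun hτM => (h.1 (hστ.models_sentence_iff.2 hτM)).of_imp hστ.mp,
    fun hτM => (h.2 (mt hστ.models_sentence_iff.1 hτM)).of_imp hστ.not.mp⟩

theorem sprovDecides_allClose (hS : ∀ x : M, ∃ t ∈ S, t.realize (default : Empty → M) = x)
    {φ : L.Formula Unit} (h : ∀ t ∈ S, SProvDecides M S T (substC φ t)) :
    SProvDecides M S T (allClose φ) := by
  refine ⟨fun hφ => SProv.srule φ fun t ht => (h t ht).1 ?_, fun hφ => ?_⟩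
  · exact (realize_substC φ t).2 ((realize_allClose φ).1 hφ _)
  · obtain ⟨x, hx⟩ := not_forall.1 (mt (realize_allClose φ).2 hφ)
    obtain ⟨t, ht, rfl⟩ := hS x
    refine ((h t ht).2 (mt (realize_substC φ t).1 hx)).of_imp <|
      Theory.imp_of_forall_realize fun N _ hnt => (Sentence.realize_not N).2 fun hall =>
        (Sentence.realize_not N).1 hnt ((realize_substC φ t).2 ((realize_allClose φ).1 hall _))

theorem sprovDecides_instantiate [Nonempty M] (hlit : ProvesTrueLiterals M S T)
    (hS : ∀ x : M, ∃ t ∈ S, t.realize (default : Empty → M) = x) {k : ℕ}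
    (φ : L.BoundedFormula Empty k) {g : Fin k → L.Term Empty} (hg : ∀ i, g i ∈ S) :
    SProvDecides M S T (φ.instantiate g) := by
  induction φ with
  | falsum => exact sprovDecides_bot
  | equal t₁ t₂ =>
    exact sprovDecides_literal hlit ((BoundedFormula.IsAtomic.equal t₁ t₂).toFormula.relabel _) hg
  | rel R ts =>
    exact sprovDecides_literal hlit ((BoundedFormula.IsAtomic.rel R ts).toFormula.relabel _) hg
  | imp φ ψ ihφ ihψ => exact (ihφ hg).imp (ihψ hg)
  | all φ ih =>
    refine (sprovDecides_allClose hS fun t ht => ?_).of_iff (allClose_instantiateInit_iff φ g)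
    refine (ih fun i => ?_).of_iff (substC_instantiateInit_iff φ g t).symm
    exact Fin.lastCases (by simpa using ht) (fun j => by simpa using hg j) i

theorem sprovDecides_of_provesTrueLiterals [Nonempty M] (hlit : ProvesTrueLiterals M S T)
    (hS : ∀ x : M, ∃ t ∈ S, t.realize (default : Empty → M) = x) (σ : L.Sentence) :
    SProvDecides M S T σ :=
  (sprovDecides_instantiate hlit hS σ finZeroElim).of_iff
    (BoundedFormula.instantiate_finZeroElim_iff σ)

end SProvDecides

end

/-- Semantic completeness: [T, ⊢_S] = Th(𝔄). -/
theorem stmt_5 {L : FirstOrder.Language.{u, v}} (M : Type w) [L.Structure M] (T : L.Theory)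
    (tm : M → L.Term Empty)
    (htm : ∀ a : M, Term.realize (fun x : Empty => x.elim) (tm a) = a)
    (hsound : ∀ σ : L.Sentence, T ⊨ᵇ σ → M ⊨ σ)
    (hatom : ∀ (n : ℕ) (φ : L.Formula (Fin n)),
      (φ.IsAtomic ∨ ∃ ψ : L.Formula (Fin n), ψ.IsAtomic ∧ φ = ψ.not) →
      ∀ f : Fin n → L.Term Empty, (∀ i, f i ∈ Set.range tm) →
        (T ⊨ᵇ φ.subst f ↔ M ⊨ φ.subst f)) :
    ∀ σ : L.Sentence, SProv L (Set.range tm) T σ ↔ M ⊨ σ := by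
  have : Nonempty M := nonempty_of_forall_models_realize hsound
  have hT : M ⊨ T := T.model_iff.2 fun σ hσ => hsound σ (Theory.models_sentence_of_mem hσ)
  have hS : ∀ x : M, ∃ t ∈ Set.range tm, t.realize (default : Empty → M) = x := fun x =>
    ⟨tm x, ⟨x, rfl⟩, (congrArg (Term.realize · (tm x)) (Subsingleton.elim _ _)).trans (htm x)⟩
  have hlit : ProvesTrueLiterals M (Set.range tm) T := fun n φ hφ f hf => (hatom n φ hφ f hf).2
  exact fun σ => ⟨SProv.realize hT hS, (sprovDecides_of_provesTrueLiterals hlit hS σ).1⟩
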